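/- (Gradient as a surface integral via the divergence theorem.) Fix −1 < ρ < 1, ρ ≠ 0, d ≥ 2, and real numbers u_1,…,u_m. Let Ω_1,…,Ω_m be a measurable partition of ℝ^d, and assume that for each k there are a Borel set Σ_k ⊆ ℝ^d and a Borel map N_k : ℝ^d → ℝ^d with ‖N_k(y)‖ = 1 for y ∈ Σ_k, such that for every x ∈ ℝ^d and every constant vector field v ∈ ℝ^d the Gauss–Green identity holds: ∫_{Ω_k} div_y(v · e^{−‖y−ρx‖²/(2(1−ρ²))}) dy = ∫_{Σ_k} ⟨v, N_k(y)⟩ e^{−‖y−ρx‖²/(2(1−ρ²))} dH^{d−1}(y), with the surface integral absolutely convergent. Then for all x, v ∈ ℝ^d, ⟨v, ∇T_ρ(Σ_{k=1}^m u_k 1_{Ω_k})(x)⟩ = −(1−ρ²)^{−d/2} (2π)^{−d/2} ρ Σ_{k=1}^m u_k ∫_{Σ_k} ⟨v, N_k(y)⟩ e^{−‖y−ρx‖²/(2(1−ρ²))} dH^{d−1}(y). -/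

import Mathlib

open MeasureTheory

noncomputable def gauss (d : ℕ) : Measure (EuclideanSpace ℝ (Fin d)) :=
  volume.withDensity (fun x => ENNReal.ofReal ((2 * Real.pi) ^ (-(d : ℝ) / 2) * Real.exp (-‖x‖ ^ 2 / 2)))

noncomputable def OU (d : ℕ) (ρ : ℝ) (f : EuclideanSpace ℝ (Fin d) → ℝ)
    (x : EuclideanSpace ℝ (Fin d)) : ℝ :=
  ∫ y, f (ρ • x + Real.sqrt (1 - ρ ^ 2) • y) ∂(gauss d)

noncomputable def Cmat (d m : ℕ) (ρ : ℝ)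
    (f g : EuclideanSpace ℝ (Fin d) → (Fin m → ℝ)) : Matrix (Fin m) (Fin m) ℝ :=
  Matrix.of fun i j => ∫ x, f x i * OU d ρ (fun y => g y j) x ∂(gauss d)

def SimplexMap (d m : ℕ) (f : EuclideanSpace ℝ (Fin d) → (Fin m → ℝ)) : Prop :=
  Measurable f ∧ ∀ x, f x ∈ stdSimplex ℝ (Fin m)

noncomputable def Sset (ρ : ℝ) (m d : ℕ) : Set (Matrix (Fin m) (Fin m) ℝ) :=
  { M | ∃ f g, SimplexMap d m f ∧ SimplexMap d m g ∧ M = Cmat d m ρ f g }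

def IsPartition (d m : ℕ) (Ω : Fin m → Set (EuclideanSpace ℝ (Fin d))) : Prop :=
  (∀ i, MeasurableSet (Ω i)) ∧ Pairwise (Function.onFun Disjoint Ω) ∧ (⋃ i, Ω i) = Set.univ

/-- The divergence `div X = Σ_i ∂X_i/∂x_i` of a vector field on `ℝ^d`. -/
noncomputable def diverg (d : ℕ) (X : EuclideanSpace ℝ (Fin d) → EuclideanSpace ℝ (Fin d))
    (x : EuclideanSpace ℝ (Fin d)) : ℝ :=
  ∑ i, fderiv ℝ X x (EuclideanSpace.single i 1) i

open scoped MeasureTheory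

/-! Substituting `z = ρx + √(1-ρ²) y`,
`T_ρ f(x) = (2π(1-ρ²))^{-d/2} ∫ f(z) e^{-‖z-ρx‖²/(2(1-ρ²))} dz`.
The `x`-derivative of this kernel may be taken under the integral over each `Ω_k`, since it is
dominated by a Gaussian locally uniformly in `x`; in direction `v` it equals `-ρ` times the
`y`-divergence of `y ↦ e^{-‖y-ρx‖²/(2(1-ρ²))} v`, which the Gauss–Green identity turns into the
surface integral over `Σ_k`. -/

open Real
open scoped RealInnerProductSpace

theorem integral_mul_sum_mul_indicator_one {α ι : Type*} [MeasurableSpace α] [Fintype ι]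
    {μ : Measure α} {g : α → ℝ} (hg : Integrable g μ) {Ω : ι → Set α}
    (hΩ : ∀ k, MeasurableSet (Ω k)) (u : ι → ℝ) :
    ∫ z, g z * ∑ k, u k * (Ω k).indicator (fun _ => (1 : ℝ)) z ∂μ =
      ∑ k, u k * ∫ z in Ω k, g z ∂μ := by
  have hpt : ∀ z, g z * ∑ k, u k * (Ω k).indicator (fun _ => (1 : ℝ)) z =
      ∑ k, u k * (Ω k).indicator g z := fun z => by
    rw [Finset.mul_sum]
    refine Finset.sum_congr rfl fun k _ => ?_
    by_cases hz : z ∈ Ω k <;> simp [hz, mul_comm]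
  simp_rw [hpt]
  rw [integral_finsetSum _ fun k _ => (hg.indicator (hΩ k)).const_mul (u k)]
  simp_rw [integral_const_mul, integral_indicator (hΩ _)]

section GaussianKernel

variable {E : Type*} [NormedAddCommGroup E] [InnerProductSpace ℝ E]

theorem HasFDerivAt.exp_neg_norm_sq_div {G : Type*} [NormedAddCommGroup G] [NormedSpace ℝ G]
    {f : G → E} {f' : G →L[ℝ] E} {x : G} (hf : HasFDerivAt f f' x) (s : ℝ) :
    HasFDerivAt (fun x => Real.exp (-‖f x‖ ^ 2 / (2 * s)))
      ((-(1 / s) * Real.exp (-‖f x‖ ^ 2 / (2 * s))) • (innerSL ℝ (f x)).comp f') x := by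
  refine (hf.norm_sq.neg.mul_const (2 * s)⁻¹).exp.congr_fderiv ?_
  ext v
  simp only [Pi.neg_apply, neg_apply, smul_apply, ContinuousLinearMap.comp_apply,
    coe_innerSL_apply, nsmul_eq_mul, smul_eq_mul]
  ring_nf

theorem hasFDerivAt_exp_neg_norm_sub_smul_sq_div (s ρ : ℝ) (z x : E) :
    HasFDerivAt (fun x : E => exp (-‖z - ρ • x‖ ^ 2 / (2 * s)))
      ((ρ / s * exp (-‖z - ρ • x‖ ^ 2 / (2 * s))) • innerSL ℝ (z - ρ • x)) x := by
  have hf : HasFDerivAt (fun x : E => z - ρ • x) (-(ρ • ContinuousLinearMap.id ℝ E)) x := by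
    simpa using ((hasFDerivAt_id x).const_smul ρ).const_sub z
  convert hf.exp_neg_norm_sq_div s using 1
  ext v
  simp only [smul_apply, ContinuousLinearMap.comp_apply, neg_apply, ContinuousLinearMap.id_apply,
    innerSL_apply_apply, smul_eq_mul, inner_neg_right, real_inner_smul_right]
  ring

theorem mul_exp_neg_sq_div_le {s : ℝ} (hs : 0 < s) (t : ℝ) :
    t * exp (-t ^ 2 / (2 * s)) ≤ (1 + 4 * s) * exp (-t ^ 2 / (4 * s)) := by
  set y := t ^ 2 / (4 * s) with hy_def
  have hy : 4 * s * y = t ^ 2 := by rw [hy_def]; field_simp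
  have hy0 : 0 ≤ y := by positivity
  have ht : t ≤ (1 + 4 * s) * exp y := by
    nlinarith [add_one_le_exp y, sq_nonneg (t - 1 / 2)]
  have hsplit : -t ^ 2 / (2 * s) = -y + -t ^ 2 / (4 * s) := by rw [hy_def]; field_simp; ring
  calc t * exp (-t ^ 2 / (2 * s)) = t * exp (-y) * exp (-t ^ 2 / (4 * s)) := by
        rw [hsplit, exp_add, mul_assoc]
    _ ≤ (1 + 4 * s) * exp y * exp (-y) * exp (-t ^ 2 / (4 * s)) := by gcongr
    _ = (1 + 4 * s) * exp (-t ^ 2 / (4 * s)) := by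
        rw [mul_assoc _ (exp y), ← exp_add, add_neg_cancel, exp_zero, mul_one]

theorem exp_neg_norm_sub_sq_div_le {F : Type*} [SeminormedAddCommGroup F] {c : ℝ} (hc : 0 < c)
    (z a : F) :
    exp (-‖z - a‖ ^ 2 / c) ≤ exp (‖a‖ ^ 2 / c) * exp (-‖z‖ ^ 2 / (2 * c)) := by
  have h : ‖z‖ ≤ ‖z - a‖ + ‖a‖ := norm_le_norm_sub_add z a
  have h2 : ‖z‖ ^ 2 ≤ 2 * ‖z - a‖ ^ 2 + 2 * ‖a‖ ^ 2 := by
    nlinarith [sq_nonneg (‖z - a‖ - ‖a‖), norm_nonneg z]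
  rw [← exp_add, exp_le_exp,
    show -‖z - a‖ ^ 2 / c = -(2 * ‖z - a‖ ^ 2) / (2 * c) by field_simp,
    show ‖a‖ ^ 2 / c + -‖z‖ ^ 2 / (2 * c) = (2 * ‖a‖ ^ 2 - ‖z‖ ^ 2) / (2 * c) by field_simp; ring]
  gcongr
  linarith

theorem norm_smul_innerSL_exp_le {s : ℝ} (hs : 0 < s) (c : ℝ) {R : ℝ} {a : E} (ha : ‖a‖ ≤ R)
    (z : E) :
    ‖(c * exp (-‖z - a‖ ^ 2 / (2 * s))) • innerSL ℝ (z - a)‖ ≤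
      |c| * (1 + 4 * s) * exp (R ^ 2 / (4 * s)) * exp (-‖z‖ ^ 2 / (2 * (4 * s))) := by
  rw [norm_smul, innerSL_apply_norm, norm_mul, norm_eq_abs, norm_eq_abs, abs_exp]
  calc |c| * exp (-‖z - a‖ ^ 2 / (2 * s)) * ‖z - a‖
      = |c| * (‖z - a‖ * exp (-‖z - a‖ ^ 2 / (2 * s))) := by ring
    _ ≤ |c| * ((1 + 4 * s) * exp (-‖z - a‖ ^ 2 / (4 * s))) := by
        gcongr |c| * ?_; exact mul_exp_neg_sq_div_le hs _
    _ ≤ |c| * ((1 + 4 * s) * (exp (‖a‖ ^ 2 / (4 * s)) * exp (-‖z‖ ^ 2 / (2 * (4 * s))))) := by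
        gcongr; exact exp_neg_norm_sub_sq_div_le (by positivity) z a
    _ ≤ |c| * ((1 + 4 * s) * (exp (R ^ 2 / (4 * s)) * exp (-‖z‖ ^ 2 / (2 * (4 * s))))) := by
        gcongr
    _ = |c| * (1 + 4 * s) * exp (R ^ 2 / (4 * s)) * exp (-‖z‖ ^ 2 / (2 * (4 * s))) := by ring

end GaussianKernel

section Integrability

variable {E : Type*} [NormedAddCommGroup E] [InnerProductSpace ℝ E] [FiniteDimensional ℝ E]
  [MeasurableSpace E] [BorelSpace E]

theorem integrable_exp_neg_norm_sq_div {c : ℝ} (hc : 0 < c) :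
    Integrable (fun z : E => exp (-‖z‖ ^ 2 / c)) := by
  have h := (GaussianFourier.integrable_cexp_neg_mul_sq_norm_add (V := E) (b := (c⁻¹ : ℂ))
    (by simpa using hc) 0 0).norm
  refine h.congr (Filter.Eventually.of_forall fun z => ?_)
  simp only [zero_mul, add_zero, Complex.norm_exp]
  norm_cast
  ring_nf

theorem integrable_exp_neg_norm_sub_sq_div {c : ℝ} (hc : 0 < c) (a : E) :
    Integrable (fun z : E => exp (-‖z - a‖ ^ 2 / c)) :=
  (integrable_exp_neg_norm_sq_div hc).comp_sub_right a

theorem integrable_smul_innerSL_exp {s : ℝ} (hs : 0 < s) (c : ℝ) (a : E) :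
    Integrable (fun z : E => (c * exp (-‖z - a‖ ^ 2 / (2 * s))) • innerSL ℝ (z - a)) := by
  refine Integrable.mono' (((integrable_exp_neg_norm_sq_div (by positivity)).const_mul
    (|c| * (1 + 4 * s) * exp (‖a‖ ^ 2 / (4 * s))))) ?_
    (Filter.Eventually.of_forall (norm_smul_innerSL_exp_le hs c le_rfl))
  fun_prop

theorem hasFDerivAt_setIntegral_exp_neg_norm_sub_smul_sq_div {s : ℝ} (hs : 0 < s) (ρ : ℝ)
    (Ω : Set E) (x₀ : E) :
    HasFDerivAt (fun x => ∫ z in Ω, exp (-‖z - ρ • x‖ ^ 2 / (2 * s)))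
      (∫ z in Ω, (ρ / s * exp (-‖z - ρ • x₀‖ ^ 2 / (2 * s))) • innerSL ℝ (z - ρ • x₀)) x₀ := by
  have hR : ∀ x ∈ Metric.ball x₀ 1, ‖ρ • x‖ ≤ ‖ρ • x₀‖ + |ρ| := fun x hx => by
    calc ‖ρ • x‖ ≤ ‖ρ • x₀‖ + ‖ρ • (x - x₀)‖ := by
          rw [smul_sub]; exact norm_le_norm_add_norm_sub' _ _
      _ ≤ ‖ρ • x₀‖ + |ρ| := by
          gcongr
          rw [norm_smul, norm_eq_abs]
          exact mul_le_of_le_one_right (abs_nonneg ρ) (mem_ball_iff_norm.1 hx).le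
  refine hasFDerivAt_integral_of_dominated_of_fderiv_le (Metric.ball_mem_nhds x₀ one_pos)
    (F := fun x z => exp (-‖z - ρ • x‖ ^ 2 / (2 * s))) (μ := volume.restrict Ω)
    (bound := fun z => |ρ / s| * (1 + 4 * s) * exp ((‖ρ • x₀‖ + |ρ|) ^ 2 / (4 * s)) *
      exp (-‖z‖ ^ 2 / (2 * (4 * s))))
    (Filter.Eventually.of_forall fun x => by fun_prop)
    (integrable_exp_neg_norm_sub_sq_div (by positivity) _).integrableOn
    (integrable_smul_innerSL_exp hs _ _).integrableOn.aestronglyMeasurable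
    (ae_of_all _ fun z x hx => norm_smul_innerSL_exp_le hs _ (hR x hx) z)
    ((integrable_exp_neg_norm_sq_div (by positivity)).const_mul _).integrableOn
    (ae_of_all _ fun z x _ => hasFDerivAt_exp_neg_norm_sub_smul_sq_div s ρ z x)

end Integrability

section Euclidean

variable {d : ℕ}

theorem diverg_smul_const {φ : EuclideanSpace ℝ (Fin d) → ℝ} {y : EuclideanSpace ℝ (Fin d)}
    (hφ : DifferentiableAt ℝ φ y) (v : EuclideanSpace ℝ (Fin d)) :
    diverg d (fun y => φ y • v) y = fderiv ℝ φ y v := by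
  conv_rhs => rw [← (EuclideanSpace.basisFun (Fin d) ℝ).sum_repr v]
  simp [diverg, fderiv_smul_const hφ, mul_comm]

theorem smul_innerSL_exp_apply_eq_neg_mul_diverg (s ρ : ℝ) (x v z : EuclideanSpace ℝ (Fin d)) :
    ((ρ / s * exp (-‖z - ρ • x‖ ^ 2 / (2 * s))) • innerSL ℝ (z - ρ • x)) v =
      -ρ * diverg d (fun y => exp (-‖y - ρ • x‖ ^ 2 / (2 * s)) • v) z := by
  have h : HasFDerivAt (fun y => exp (-‖y - ρ • x‖ ^ 2 / (2 * s))) _ z :=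
    ((hasFDerivAt_id z).sub_const (ρ • x)).exp_neg_norm_sq_div s
  rw [diverg_smul_const h.differentiableAt, h.fderiv]
  simp only [smul_apply, innerSL_apply_apply, smul_eq_mul, ContinuousLinearMap.comp_apply,
    ContinuousLinearMap.id_apply, id_eq]
  ring

theorem integral_gauss (g : EuclideanSpace ℝ (Fin d) → ℝ) :
    ∫ y, g y ∂(gauss d) = ∫ y, ((2 * π) ^ (-(d : ℝ) / 2) * exp (-‖y‖ ^ 2 / 2)) * g y := by
  rw [gauss, integral_withDensity_eq_integral_toReal_smul (by fun_prop)
    (ae_of_all _ fun _ => ENNReal.ofReal_lt_top)]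
  congr with y
  rw [ENNReal.toReal_ofReal (by positivity), smul_eq_mul]

theorem inv_sqrt_pow_eq_rpow {a : ℝ} (ha : 0 ≤ a) (n : ℕ) :
    (√a ^ n)⁻¹ = a ^ (-(n : ℝ) / 2) := by
  rw [← rpow_natCast, sqrt_eq_rpow, ← rpow_mul ha, ← rpow_neg ha]
  ring_nf

theorem OU_eq_integral {ρ : ℝ} (hρ : ρ ^ 2 < 1) (f : EuclideanSpace ℝ (Fin d) → ℝ)
    (x : EuclideanSpace ℝ (Fin d)) :
    OU d ρ f x = (1 - ρ ^ 2) ^ (-(d : ℝ) / 2) * (2 * π) ^ (-(d : ℝ) / 2) *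
      ∫ z, exp (-‖z - ρ • x‖ ^ 2 / (2 * (1 - ρ ^ 2))) * f z := by
  have hs : 0 < 1 - ρ ^ 2 := by linarith
  set σ := √(1 - ρ ^ 2)
  have hσ : 0 < σ := sqrt_pos.2 hs
  set g : EuclideanSpace ℝ (Fin d) → ℝ := fun z =>
    (2 * π) ^ (-(d : ℝ) / 2) * (exp (-‖z - ρ • x‖ ^ 2 / (2 * (1 - ρ ^ 2))) * f z)
  have hg : ∀ y, (2 * π) ^ (-(d : ℝ) / 2) * exp (-‖y‖ ^ 2 / 2) * f (ρ • x + σ • y) =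
      g (ρ • x + σ • y) := fun y => by
    have hnorm : ‖ρ • x + σ • y - ρ • x‖ ^ 2 = (1 - ρ ^ 2) * ‖y‖ ^ 2 := by
      rw [add_sub_cancel_left, norm_smul, mul_pow, norm_eq_abs, sq_abs, sq_sqrt hs.le]
    simp only [g, hnorm]
    field_simp
  calc OU d ρ f x = ∫ y, g (ρ • x + σ • y) := by
        rw [OU, integral_gauss]
        exact integral_congr_ae (ae_of_all _ hg)
    _ = (σ ^ d)⁻¹ * ∫ z, g z := by
        rw [Measure.integral_comp_smul volume (fun w => g (ρ • x + w)) σ,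
          integral_add_left_eq_self g (ρ • x), finrank_euclideanSpace_fin,
          abs_of_pos (by positivity), smul_eq_mul]
    _ = _ := by
        rw [inv_sqrt_pow_eq_rpow hs.le, integral_const_mul]
        ring

end Euclidean

theorem gradient_as_surface_integral_general
    (ρ : ℝ) (hρ₁ : -1 < ρ) (hρ₂ : ρ < 1) (d : ℕ)
    (m : ℕ) (u : Fin m → ℝ)
    (Ω : Fin m → Set (EuclideanSpace ℝ (Fin d))) (hΩ : IsPartition d m Ω)
    (Sig : Fin m → Set (EuclideanSpace ℝ (Fin d)))
    (N : Fin m → EuclideanSpace ℝ (Fin d) → EuclideanSpace ℝ (Fin d))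
    (hGG : ∀ (k : Fin m) (x v : EuclideanSpace ℝ (Fin d)),
      MeasureTheory.Integrable
        (fun y => (inner ℝ v (N k y) : ℝ) * Real.exp (-‖y - ρ • x‖ ^ 2 / (2 * (1 - ρ ^ 2))))
        ((μH[(d : ℝ) - 1]).restrict (Sig k)) ∧
      (∫ y in Ω k,
          diverg d (fun y => Real.exp (-‖y - ρ • x‖ ^ 2 / (2 * (1 - ρ ^ 2))) • v) y)
        = ∫ y in Sig k, (inner ℝ v (N k y) : ℝ) *
            Real.exp (-‖y - ρ • x‖ ^ 2 / (2 * (1 - ρ ^ 2))) ∂(μH[(d : ℝ) - 1])) :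
    ∀ x v : EuclideanSpace ℝ (Fin d),
      fderiv ℝ (OU d ρ (fun y => ∑ k, u k * Set.indicator (Ω k) (fun _ => (1 : ℝ)) y)) x v =
        -((1 - ρ ^ 2) ^ (-(d : ℝ) / 2) * (2 * Real.pi) ^ (-(d : ℝ) / 2)) * ρ *
          ∑ k, u k * ∫ y in Sig k, (inner ℝ v (N k y) : ℝ) *
            Real.exp (-‖y - ρ • x‖ ^ 2 / (2 * (1 - ρ ^ 2))) ∂(μH[(d : ℝ) - 1]) := by
  intro x v
  have hρ : ρ ^ 2 < 1 := by nlinarith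
  have hs : 0 < 1 - ρ ^ 2 := by linarith
  set c := (1 - ρ ^ 2) ^ (-(d : ℝ) / 2) * (2 * π) ^ (-(d : ℝ) / 2)
  set L : Fin m → EuclideanSpace ℝ (Fin d) →L[ℝ] ℝ := fun k => ∫ z in Ω k,
    (ρ / (1 - ρ ^ 2) * exp (-‖z - ρ • x‖ ^ 2 / (2 * (1 - ρ ^ 2)))) • innerSL ℝ (z - ρ • x)
  have hOU : OU d ρ (fun y => ∑ k, u k * (Ω k).indicator (fun _ => (1 : ℝ)) y) =
      fun x' => c * ∑ k, u k * ∫ z in Ω k, exp (-‖z - ρ • x'‖ ^ 2 / (2 * (1 - ρ ^ 2))) :=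
    funext fun x' => by
      rw [OU_eq_integral hρ, integral_mul_sum_mul_indicator_one
        (integrable_exp_neg_norm_sub_sq_div (by positivity) _) hΩ.1]
  have hderiv : HasFDerivAt
      (fun x' => c * ∑ k, u k * ∫ z in Ω k, exp (-‖z - ρ • x'‖ ^ 2 / (2 * (1 - ρ ^ 2))))
      (c • ∑ k, u k • L k) x :=
    (HasFDerivAt.fun_sum fun k _ =>
      (hasFDerivAt_setIntegral_exp_neg_norm_sub_smul_sq_div hs ρ (Ω k) x).const_mul (u k)).const_mul
      c
  have hL : ∀ k, L k v = -ρ * ∫ y in Sig k, (inner ℝ v (N k y) : ℝ) *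
      exp (-‖y - ρ • x‖ ^ 2 / (2 * (1 - ρ ^ 2))) ∂(μH[(d : ℝ) - 1]) := fun k => by
    rw [ContinuousLinearMap.integral_apply (integrable_smul_innerSL_exp hs _ _).integrableOn,
      ← (hGG k x v).2, ← integral_const_mul]
    simp_rw [smul_innerSL_exp_apply_eq_neg_mul_diverg]
  rw [hOU, hderiv.fderiv]
  simp only [smul_apply, sum_apply, smul_eq_mul, hL, Finset.mul_sum]
  exact Finset.sum_congr rfl fun k _ => by ring

theorem gradient_as_surface_integral
    (ρ : ℝ) (hρ₁ : -1 < ρ) (hρ₂ : ρ < 1) (hρ₀ : ρ ≠ 0) (d : ℕ) (hd : 2 ≤ d)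
    (m : ℕ) (u : Fin m → ℝ)
    (Ω : Fin m → Set (EuclideanSpace ℝ (Fin d))) (hΩ : IsPartition d m Ω)
    (Sig : Fin m → Set (EuclideanSpace ℝ (Fin d))) (hSig : ∀ k, MeasurableSet (Sig k))
    (N : Fin m → EuclideanSpace ℝ (Fin d) → EuclideanSpace ℝ (Fin d))
    (hNmeas : ∀ k, Measurable (N k)) (hNunit : ∀ k, ∀ y ∈ Sig k, ‖N k y‖ = 1)
    (hGG : ∀ (k : Fin m) (x v : EuclideanSpace ℝ (Fin d)),
      MeasureTheory.Integrable
        (fun y => (inner ℝ v (N k y) : ℝ) * Real.exp (-‖y - ρ • x‖ ^ 2 / (2 * (1 - ρ ^ 2))))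
        ((μH[(d : ℝ) - 1]).restrict (Sig k)) ∧
      (∫ y in Ω k,
          diverg d (fun y => Real.exp (-‖y - ρ • x‖ ^ 2 / (2 * (1 - ρ ^ 2))) • v) y)
        = ∫ y in Sig k, (inner ℝ v (N k y) : ℝ) *
            Real.exp (-‖y - ρ • x‖ ^ 2 / (2 * (1 - ρ ^ 2))) ∂(μH[(d : ℝ) - 1])) :
    ∀ x v : EuclideanSpace ℝ (Fin d),
      fderiv ℝ (OU d ρ (fun y => ∑ k, u k * Set.indicator (Ω k) (fun _ => (1 : ℝ)) y)) x v =
        -((1 - ρ ^ 2) ^ (-(d : ℝ) / 2) * (2 * Real.pi) ^ (-(d : ℝ) / 2)) * ρ *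
          ∑ k, u k * ∫ y in Sig k, (inner ℝ v (N k y) : ℝ) *
            Real.exp (-‖y - ρ • x‖ ^ 2 / (2 * (1 - ρ ^ 2))) ∂(μH[(d : ℝ) - 1]) :=
  gradient_as_surface_integral_general ρ hρ₁ hρ₂ d m u Ω hΩ Sig N hGG
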